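/- arXiv:2007.12965 — 3 statements merged into one kernel-verified Lean document; each statement's English description precedes it below -/
import Mathlib

section
/- If T ∈ GL(n, Z) is a quasi-unipotent matrix of infinite order, then for all but finitely many primes p, the order of the reduction of T modulo p in GL(n, F_p) is divisible by p. -/
/-!
Write `T ^ m = 1 + N` with `N ≠ 0` nilpotent. In characteristic `p` the Frobenius identity
`(1 + N) ^ (p ^ n) = 1 + N ^ (p ^ n) = 1` shows that the reduction of `T ^ m` has `p`-power order.
If `p` does not divide the order of the reduction of `T`, that reduction of `T ^ m` is therefore
trivial, i.e. `p` divides every entry of `N`; as `N ≠ 0`, only finitely many primes do.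
-/

theorem pow_prime_pow_eq_one_of_sub_one_pow_eq_zero {R : Type*} [Ring R] (p : ℕ)
    [Fact p.Prime] [CharP R p] {a : R} {k : ℕ} (h : (a - 1) ^ k = 0) : a ^ p ^ k = 1 := by
  have h' : (a - 1) ^ p ^ k = 0 :=
    pow_eq_zero_of_le (Nat.lt_pow_self (Fact.out : p.Prime).one_lt).le h
  rwa [sub_pow_char_pow_of_commute p k (Commute.one_right a), one_pow, sub_eq_zero] at h'

theorem eq_one_of_pow_prime_pow_eq_one {G : Type*} [Monoid G] {p : ℕ} (hp : p.Prime) {g : G}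
    (hg : ¬p ∣ orderOf g) {k : ℕ} (h : g ^ p ^ k = 1) : g = 1 := by
  have hcop : (orderOf g).Coprime (p ^ k) := (hp.coprime_iff_not_dvd.mpr hg).symm.pow_right k
  exact orderOf_eq_one_iff.mp (hcop.eq_one_of_dvd (orderOf_dvd_of_pow_eq_one h))

theorem Units.eq_one_of_sub_one_pow_eq_zero {R : Type*} [Ring R] (p : ℕ) [Fact p.Prime]
    [CharP R p] {u : Rˣ} (hu : ¬p ∣ orderOf u) {k : ℕ} (h : ((u : R) - 1) ^ k = 0) : u = 1 :=
  eq_one_of_pow_prime_pow_eq_one Fact.out hu (k := k) <| Units.ext <| by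
    simpa using pow_prime_pow_eq_one_of_sub_one_pow_eq_zero p h

theorem Matrix.finite_setOf_map_intCast_eq_zero {m n : Type*} {N : Matrix m n ℤ} (hN : N ≠ 0) :
    {p : ℕ | N.map (Int.cast : ℤ → ZMod p) = 0}.Finite := by
  obtain ⟨i, j, hij⟩ : ∃ i j, N i j ≠ 0 := by
    by_contra! h
    exact hN (Matrix.ext h)
  refine (Nat.divisors (N i j).natAbs).finite_toSet.subset fun p hp => ?_
  have hdvd : (p : ℤ) ∣ N i j :=
    (ZMod.intCast_zmod_eq_zero_iff_dvd _ p).mp (congrFun (congrFun hp i) j)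
  exact Nat.mem_divisors.mpr ⟨Int.natCast_dvd.mp hdvd, Int.natAbs_ne_zero.mpr hij⟩

/-- If `T ∈ GL(n, ℤ)` is quasi-unipotent (some positive power is unipotent) and of
infinite order, then for all but finitely many primes `p` the order of the reduction
of `T` modulo `p` in `GL(n, F_p)` is divisible by `p`. -/
theorem quasiUnipotent_order_mod_p_divisible (n : ℕ) (T : GL (Fin n) ℤ)
    (hqu : ∃ m : ℕ, 0 < m ∧ ((T : Matrix (Fin n) (Fin n) ℤ) ^ m - 1) ^ n = 0)
    (hinf : ∀ k : ℕ, 0 < k → T ^ k ≠ 1) :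
    {p : ℕ | p.Prime ∧
      ¬ p ∣ orderOf (Matrix.GeneralLinearGroup.map (Int.castRingHom (ZMod p)) T)}.Finite := by
  obtain ⟨m, hm, hnil⟩ := hqu
  set N := (T : Matrix (Fin n) (Fin n) ℤ) ^ m - 1
  have hN : N ≠ 0 := fun h =>
    hinf m hm (Units.ext (by rw [Units.val_pow_eq_pow_val, Units.val_one]; exact sub_eq_zero.mp h))
  -- `Matrix.charP` needs a nonempty index type
  have : Nonempty (Fin n) := not_isEmpty_iff.mp fun _ => hN (Subsingleton.elim _ _)
  refine (Matrix.finite_setOf_map_intCast_eq_zero hN).subset ?_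
  rintro p ⟨hp, hndvd⟩
  have : Fact p.Prime := ⟨hp⟩
  set x := Matrix.GeneralLinearGroup.map (Int.castRingHom (ZMod p)) T
  have hred : (Int.castRingHom (ZMod p)).mapMatrix N =
      ((x ^ m : GL (Fin n) (ZMod p)) : Matrix (Fin n) (Fin n) (ZMod p)) - 1 := by
    simp [N, x, map_sub, map_pow]
  have hxm : x ^ m = 1 := by
    refine Units.eq_one_of_sub_one_pow_eq_zero p (fun h => hndvd (h.trans (orderOf_pow_dvd m)))
      (k := n) ?_
    rw [← hred, ← map_pow, hnil, map_zero]
  show (Int.castRingHom (ZMod p)).mapMatrix N = 0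
  rw [hred, hxm, Units.val_one, sub_self]
end

section
/- Let T ∈ GL(n, Z) be a matrix all of whose complex eigenvalues have absolute value 1. Then every eigenvalue of T is a root of unity. -/
/-!
The characteristic polynomial is monic, so once its roots lie in the closed unit disk its Mahler
measure is `1`. A nonzero root `z` of an integer polynomial of Mahler measure `1` is an algebraic
integer whose conjugates all lie in the unit disk; so are all its powers, and there are only
finitely many such algebraic integers in `ℚ(z)`, hence two powers of `z` coincide.
-/

open scoped Polynomial

namespace Polynomial

theorem Monic.mahlerMeasure_eq_one {p : ℂ[X]} (hp : p.Monic)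
    (h : ∀ z : ℂ, p.IsRoot z → ‖z‖ ≤ 1) : p.mahlerMeasure = 1 := by
  rw [mahlerMeasure_eq_leadingCoeff_mul_prod_roots, hp.leadingCoeff, norm_one, one_mul]
  refine Multiset.prod_eq_one fun x hx ↦ ?_
  obtain ⟨z, hz, rfl⟩ := Multiset.mem_map.mp hx
  exact max_eq_left (h z (isRoot_of_mem_roots hz))

theorem Monic.pow_eq_one_of_norm_root_le_one {p : ℤ[X]} (hp : p.Monic)
    (h : ∀ z : ℂ, (p.map (Int.castRingHom ℂ)).IsRoot z → ‖z‖ ≤ 1) {z : ℂ} (hz₀ : z ≠ 0)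
    (hz : (p.map (Int.castRingHom ℂ)).IsRoot z) : ∃ k, 0 < k ∧ z ^ k = 1 :=
  pow_eq_one_of_mahlerMeasure_eq_one ((hp.map _).mahlerMeasure_eq_one h) hz₀
    (mem_roots'.mpr ⟨(hp.map _).ne_zero, hz⟩)

end Polynomial

/-- Kronecker's theorem: if all complex eigenvalues of `T ∈ GL(n, ℤ)` have absolute
value `1`, then every eigenvalue of `T` is a root of unity. -/
theorem eigenvalues_rootsOfUnity_of_abs_eq_one (n : ℕ) (T : GL (Fin n) ℤ)
    (habs : ∀ z : ℂ, (Matrix.charpoly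
        (((T : Matrix (Fin n) (Fin n) ℤ)).map (Int.cast : ℤ → ℂ))).IsRoot z →
      ‖z‖ = 1) :
    ∀ z : ℂ, (Matrix.charpoly
        (((T : Matrix (Fin n) (Fin n) ℤ)).map (Int.cast : ℤ → ℂ))).IsRoot z →
      ∃ k : ℕ, 0 < k ∧ z ^ k = 1 := by
  have hmap : Matrix.charpoly ((T : Matrix (Fin n) (Fin n) ℤ).map (Int.cast : ℤ → ℂ)) =
      (T : Matrix (Fin n) (Fin n) ℤ).charpoly.map (Int.castRingHom ℂ) :=
    Matrix.charpoly_map _ (Int.castRingHom ℂ)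
  rw [hmap] at habs ⊢
  intro z hz
  have hz₀ : z ≠ 0 := norm_ne_zero_iff.mp (by rw [habs z hz]; exact one_ne_zero)
  exact (Matrix.charpoly_monic _).pow_eq_one_of_norm_root_le_one
    (fun w hw ↦ (habs w hw).le) hz₀ hz
end

section
/- Let Γ be a finitely generated subgroup of GL(n, Z). If Γ is finite when reduced modulo every prime p (i.e., for every prime p the image of Γ in GL(n, F_p) has bounded cardinality independent of p), then Γ is finite. -/
/-! Finitely many integer matrices have bounded entries, so reduction modulo any `m` exceeding
twice the bound is injective on them. Hence if `Γ` is infinite, its image modulo `m` eventually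
contains any prescribed number of elements, which is incompatible with a bound uniform in `p`
along the infinitely many primes. -/

open Filter

theorem ZMod.intCast_injOn_of_two_mul_lt {m : ℕ} {M : ℤ} (h : 2 * M < m) :
    Set.InjOn (Int.cast : ℤ → ZMod m) {a | |a| ≤ M} := by
  intro a ha b hb hab
  have hdvd : (m : ℤ) ∣ b - a := (ZMod.intCast_eq_intCast_iff_dvd_sub a b m).1 hab
  have habs : |b - a| < m := by
    calc |b - a| ≤ |b| + |a| := abs_sub _ _
      _ ≤ 2 * M := by linarith [ha.out, hb.out]
      _ < m := h
  linarith [Int.eq_zero_of_abs_lt_dvd hdvd habs]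

theorem Matrix.eventually_injOn_map_intCast {ι κ : Type*} [Finite ι] [Finite κ]
    {s : Set (Matrix ι κ ℤ)} (hs : s.Finite) :
    ∀ᶠ m : ℕ in atTop, Set.InjOn (fun A => A.map (Int.cast : ℤ → ZMod m)) s := by
  obtain ⟨M, hM⟩ : BddAbove (⋃ A ∈ s, Set.range fun ij : ι × κ => |A ij.1 ij.2|) :=
    (hs.biUnion fun _ _ => Set.finite_range _).bddAbove
  have hbound : ∀ A ∈ s, ∀ i j, |A i j| ≤ M := fun A hA i j =>
    hM (Set.mem_biUnion hA ⟨(i, j), rfl⟩)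
  filter_upwards [tendsto_natCast_atTop_atTop.eventually_gt_atTop (2 * M)] with m hm A hA B hB hAB
  ext i j
  exact ZMod.intCast_injOn_of_two_mul_lt hm (hbound A hA i j) (hbound B hB i j)
    (congrFun₂ hAB i j)

theorem Matrix.GeneralLinearGroup.eventually_injOn_map_intCast {ι : Type*} [Fintype ι]
    [DecidableEq ι] {s : Set (GL ι ℤ)} (hs : s.Finite) :
    ∀ᶠ m : ℕ in atTop, Set.InjOn (map (Int.castRingHom (ZMod m))) s := by
  filter_upwards [Matrix.eventually_injOn_map_intCast (hs.image (↑· : GL ι ℤ → Matrix ι ι ℤ))]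
    with m hm g hg h hh hgh
  exact Units.ext <| hm ⟨g, hg, rfl⟩ ⟨h, hh, rfl⟩ (congrArg Units.val hgh)

theorem Matrix.GeneralLinearGroup.tendsto_card_map_intCast_of_infinite {ι : Type*} [Fintype ι]
    [DecidableEq ι] {Γ : Subgroup (GL ι ℤ)} (hΓ : (Γ : Set (GL ι ℤ)).Infinite) :
    Tendsto (fun m : ℕ => Nat.card (Γ.map (map (Int.castRingHom (ZMod m))))) atTop atTop := by
  refine tendsto_atTop.2 fun N => ?_
  obtain ⟨t, htΓ, rfl⟩ := hΓ.exists_subset_card_eq N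
  filter_upwards [eventually_injOn_map_intCast t.finite_toSet, eventually_ge_atTop 1]
    with m hinj hm
  have : NeZero m := ⟨by omega⟩
  calc t.card = (map (Int.castRingHom (ZMod m)) '' t).ncard := by
        rw [hinj.ncard_image, Set.ncard_coe_finset]
    _ ≤ (Γ.map (map (Int.castRingHom (ZMod m))) : Set (GL ι (ZMod m))).ncard :=
        Set.ncard_le_ncard (Set.image_mono htΓ) (Set.toFinite _)
    _ = _ := (Nat.card_coe_set_eq _).symm

theorem finite_of_bounded_reduction_mod_primes_general (n : ℕ) (Γ : Subgroup (GL (Fin n) ℤ))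
    (hbd : ∃ N : ℕ, ∀ p : ℕ, p.Prime →
      Nat.card (Γ.map (Matrix.GeneralLinearGroup.map (Int.castRingHom (ZMod p)))) ≤ N) :
    (Γ : Set (GL (Fin n) ℤ)).Finite := by
  obtain ⟨N, hN⟩ := hbd
  by_contra hΓ
  have hlarge := (Matrix.GeneralLinearGroup.tendsto_card_map_intCast_of_infinite
    hΓ).eventually_gt_atTop N
  obtain ⟨p, hbig, hp⟩ :=
    (hlarge.and_frequently (Nat.frequently_atTop_iff_infinite.2 Nat.infinite_setOfPred_prime)).exists
  exact (hN p hp).not_gt hbig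

/-- If `Γ` is a finitely generated subgroup of `GL(n, ℤ)` whose image in `GL(n, F_p)`
has cardinality bounded independently of the prime `p`, then `Γ` is finite. -/
theorem finite_of_bounded_reduction_mod_primes (n : ℕ) (Γ : Subgroup (GL (Fin n) ℤ))
    (hfg : Γ.FG)
    (hbd : ∃ N : ℕ, ∀ p : ℕ, p.Prime →
      Nat.card (Γ.map (Matrix.GeneralLinearGroup.map (Int.castRingHom (ZMod p)))) ≤ N) :
    (Γ : Set (GL (Fin n) ℤ)).Finite :=
  finite_of_bounded_reduction_mod_primes_general n Γ hbd
end
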